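/- Let C be a model category: a category with finite colimits equipped with classes of weak equivalences (satisfying the two-out-of-three property), cofibrations, and fibrations, such that every morphism factors as a cofibration followed by a morphism that is both a fibration and a weak equivalence. Assume left properness in the following form: for every pushout square in which one leg is a cofibration with cofibrant domain and the other leg is a weak equivalence between cofibrant objects, the pushout of the weak equivalence along the cofibration is again a weak equivalence. Let A, B, R, Q, Q' be objects with A and B cofibrant, and let η : A ⟶ R, h : A ⟶ B, g : R ⟶ Q, g' : R ⟶ Q', f : B ⟶ Q, f' : B ⟶ Q' be morphisms such that h, g, and g' are weak equivalences, g ∘ η = f ∘ h, and g' ∘ η = f' ∘ h. Then there exist an object R̃ and morphisms h₂ : B ⟶ R̃, h₄ : R̃ ⟶ Q, h₃ : R̃ ⟶ Q' such that h₄ and h₃ are weak equivalences, h₄ ∘ h₂ = f, and h₃ ∘ h₂ = f'. -/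

import Mathlib

/-! Factor `η` as a cofibration `η₁ : A ⟶ R₁` followed by a trivial fibration `η₂`, and take
`R̃ := R₁ ⊔_A B`. Left properness makes `R₁ ⟶ R̃` a weak equivalence, so by two-out-of-three
the maps `R̃ ⟶ Q` and `R̃ ⟶ Q'` induced by `(η₂ ≫ g, f)` and `(η₂ ≫ g', f')` are weak
equivalences, and they restrict to `f` and `f'` along `h₂ : B ⟶ R̃`. -/

open CategoryTheory CategoryTheory.Limits

lemma pushout_desc_mem_of_mem_inl {C : Type*} [Category C] (W : MorphismProperty C)
    (hW_cancel_right : ∀ {X Y Z : C} (u : X ⟶ Y) (v : Y ⟶ Z), W u → W (u ≫ v) → W v)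
    {X Y Z T : C} (i : X ⟶ Y) (w : X ⟶ Z) [HasPushout i w]
    (a : Y ⟶ T) (b : Z ⟶ T) (hab : i ≫ a = w ≫ b)
    (hinl : W (pushout.inl i w)) (ha : W a) : W (pushout.desc a b hab) :=
  hW_cancel_right _ _ hinl (by rwa [pushout.inl_desc])

theorem sym_lem2_general {C : Type*} [Category C] [HasFiniteColimits C]
    (W Cof Fib : MorphismProperty C)
    -- two-out-of-three for weak equivalences
    (hW_comp : ∀ {X Y Z : C} (u : X ⟶ Y) (v : Y ⟶ Z), W u → W v → W (u ≫ v))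
    (hW_cancel_right : ∀ {X Y Z : C} (u : X ⟶ Y) (v : Y ⟶ Z), W u → W (u ≫ v) → W v)
    -- factorization: cofibration followed by a trivial fibration
    (hfact : ∀ {X Y : C} (u : X ⟶ Y), ∃ (Z : C) (i : X ⟶ Z) (p : Z ⟶ Y),
      Cof i ∧ Fib p ∧ W p ∧ i ≫ p = u)
    -- left properness: the pushout of a weak equivalence between cofibrant
    -- objects along a cofibration with cofibrant domain is a weak equivalence
    (hproper : ∀ {X Y Z P : C} (i : X ⟶ Y) (w : X ⟶ Z) (w' : Y ⟶ P) (j : Z ⟶ P),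
      Cof i → W w → Cof (initial.to X) → Cof (initial.to Z) →
      IsPushout i w w' j → W w')
    {A B R Q Q' : C}
    (hA : Cof (initial.to A)) (hB : Cof (initial.to B))
    (η : A ⟶ R) (h : A ⟶ B) (g : R ⟶ Q) (g' : R ⟶ Q')
    (f : B ⟶ Q) (f' : B ⟶ Q')
    (hh : W h) (hg : W g) (hg' : W g')
    (hsq : η ≫ g = h ≫ f) (hsq' : η ≫ g' = h ≫ f') :
    ∃ (Rt : C) (h₂ : B ⟶ Rt) (h₄ : Rt ⟶ Q) (h₃ : Rt ⟶ Q'),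
      W h₄ ∧ W h₃ ∧ h₂ ≫ h₄ = f ∧ h₂ ≫ h₃ = f' := by
  obtain ⟨R₁, η₁, η₂, hη₁, -, hη₂, hfac⟩ := hfact η
  have hinl : W (pushout.inl η₁ h) :=
    hproper η₁ h _ _ hη₁ hh hA hB (IsPushout.of_hasPushout η₁ h)
  have hcomm : η₁ ≫ η₂ ≫ g = h ≫ f := by rw [← Category.assoc, hfac, hsq]
  have hcomm' : η₁ ≫ η₂ ≫ g' = h ≫ f' := by rw [← Category.assoc, hfac, hsq']
  exact ⟨pushout η₁ h, pushout.inr η₁ h, pushout.desc _ _ hcomm, pushout.desc _ _ hcomm',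
    pushout_desc_mem_of_mem_inl W hW_cancel_right _ _ _ _ _ hinl (hW_comp _ _ hη₂ hg),
    pushout_desc_mem_of_mem_inl W hW_cancel_right _ _ _ _ _ hinl (hW_comp _ _ hη₂ hg'),
    pushout.inr_desc _ _ _, pushout.inr_desc _ _ _⟩

/-- Lemma 2.7 (sym_lem2), stated in an arbitrary model category satisfying the
stated left-properness hypothesis.  `W`, `Cof`, `Fib` are the weak
equivalences (satisfying two-out-of-three), cofibrations and fibrations; every
morphism factors as a cofibration followed by a trivial fibration; the pushout
of a weak equivalence between cofibrant objects along a cofibration with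
cofibrant domain is a weak equivalence.  An object `X` is cofibrant when the
unique map from the initial object to `X` is a cofibration.  Given
`η : A ⟶ R`, `h : A ⟶ B`, `g : R ⟶ Q`, `g' : R ⟶ Q'`, `f : B ⟶ Q`,
`f' : B ⟶ Q'` with `A`, `B` cofibrant, `h`, `g`, `g'` weak equivalences and
both squares commuting, there are `R̃`, `h₂ : B ⟶ R̃` and weak equivalences
`h₄ : R̃ ⟶ Q`, `h₃ : R̃ ⟶ Q'` with `h₄ ∘ h₂ = f` and `h₃ ∘ h₂ = f'`. -/
theorem sym_lem2 {C : Type*} [Category C] [HasFiniteColimits C]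
    (W Cof Fib : MorphismProperty C)
    -- two-out-of-three for weak equivalences
    (hW_comp : ∀ {X Y Z : C} (u : X ⟶ Y) (v : Y ⟶ Z), W u → W v → W (u ≫ v))
    (hW_cancel_left : ∀ {X Y Z : C} (u : X ⟶ Y) (v : Y ⟶ Z), W v → W (u ≫ v) → W u)
    (hW_cancel_right : ∀ {X Y Z : C} (u : X ⟶ Y) (v : Y ⟶ Z), W u → W (u ≫ v) → W v)
    -- factorization: cofibration followed by a trivial fibration
    (hfact : ∀ {X Y : C} (u : X ⟶ Y), ∃ (Z : C) (i : X ⟶ Z) (p : Z ⟶ Y),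
      Cof i ∧ Fib p ∧ W p ∧ i ≫ p = u)
    -- left properness: the pushout of a weak equivalence between cofibrant
    -- objects along a cofibration with cofibrant domain is a weak equivalence
    (hproper : ∀ {X Y Z P : C} (i : X ⟶ Y) (w : X ⟶ Z) (w' : Y ⟶ P) (j : Z ⟶ P),
      Cof i → W w → Cof (initial.to X) → Cof (initial.to Z) →
      IsPushout i w w' j → W w')
    {A B R Q Q' : C}
    (hA : Cof (initial.to A)) (hB : Cof (initial.to B))
    (η : A ⟶ R) (h : A ⟶ B) (g : R ⟶ Q) (g' : R ⟶ Q')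
    (f : B ⟶ Q) (f' : B ⟶ Q')
    (hh : W h) (hg : W g) (hg' : W g')
    (hsq : η ≫ g = h ≫ f) (hsq' : η ≫ g' = h ≫ f') :
    ∃ (Rt : C) (h₂ : B ⟶ Rt) (h₄ : Rt ⟶ Q) (h₃ : Rt ⟶ Q'),
      W h₄ ∧ W h₃ ∧ h₂ ≫ h₄ = f ∧ h₂ ≫ h₃ = f' :=
  sym_lem2_general W Cof Fib hW_comp hW_cancel_right hfact hproper hA hB η h g g' f f' hh hg hg' hsq
    hsq'
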